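/- The family P(2) of all four functions on a two-element base set admits a labeled compression scheme of size 1, and no labeled compression scheme of size 0 exists for it; that is, lcs(P(2)) = 1. In particular lcs(P(2)) < ucs(P(2)) = 2. -/

import Mathlib

/-- The family `C5`: a function `f : ZMod 5 → Bool` belongs to `C5` iff it takes the
values 1-0-0-1 on some four consecutive vertices of the pentagon. -/
def C5 : Set (ZMod 5 → Bool) :=
  {f | ∃ i : ZMod 5, f i = true ∧ f (i + 1) = false ∧ f (i + 2) = false ∧ f (i + 3) = true}

/-- A family `F` shatters a finite set `X` if every `{0,1}`-function on `X`
has an extension in `F`. -/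
def Shatters {B : Type*} (F : Set (B → Bool)) (X : Finset B) : Prop :=
  ∀ g : B → Bool, ∃ f ∈ F, ∀ x ∈ X, f x = g x

/-- The VC-dimension of a family: the size of the largest shattered set. -/
noncomputable def vcDim {B : Type*} (F : Set (B → Bool)) : ℕ :=
  sSup {n | ∃ X : Finset B, Shatters F X ∧ X.card = n}

/-- `g : B → Option Bool` (a partial function, with domain the set of points
where `g` is `some _`) is a partial function (trace) of the family `F` if some `f ∈ F`
extends it. -/
def IsPartialOf {B : Type*} (F : Set (B → Bool)) (g : B → Option Bool) : Prop :=
  ∃ f ∈ F, ∀ x b, g x = some b → f x = b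

/-- `F` admits an unlabeled compression scheme of size `k`: a pair `(α, β)` where `α`
maps every partial function `g` of `F` (with domain `S`) to a subset `α g ⊆ S` with
`|α g| ≤ k`, `β` maps every subset of the base set to a total function, and
`β (α g)` extends `g`. -/
def HasUCS {B : Type*} (F : Set (B → Bool)) (k : ℕ) : Prop :=
  ∃ (α : (B → Option Bool) → Finset B) (β : Finset B → (B → Bool)),
    ∀ g : B → Option Bool, IsPartialOf F g →
      (∀ x ∈ α g, (g x).isSome) ∧ (α g).card ≤ k ∧
      (∀ x b, g x = some b → β (α g) x = b)

/-- The minimum size of an unlabeled compression scheme for `F`. -/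
noncomputable def ucs {B : Type*} (F : Set (B → Bool)) : ℕ := sInf {k | HasUCS F k}

/-- `F` admits a labeled compression scheme of size `k`: `α` maps every partial
function `g` of `F` to a trace (sub-partial-function) of `g` with domain of size at
most `k`, `β` maps every partial function to a total function, and `β (α g)`
extends `g`. -/
def HasLCS {B : Type*} [Fintype B] (F : Set (B → Bool)) (k : ℕ) : Prop :=
  ∃ (α : (B → Option Bool) → (B → Option Bool))
    (β : (B → Option Bool) → (B → Bool)),
    ∀ g : B → Option Bool, IsPartialOf F g →
      (∀ x b, α g x = some b → g x = some b) ∧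
      (Finset.univ.filter fun x => (α g x).isSome).card ≤ k ∧
      (∀ x b, g x = some b → β (α g) x = b)

/-- The minimum size of a labeled compression scheme for `F`. -/
noncomputable def lcs {B : Type*} [Fintype B] (F : Set (B → Bool)) : ℕ :=
  sInf {k | HasLCS F k}

/-- `P 2`: the family of all four functions on a two-element base set. -/
def P2 : Set (Fin 2 → Bool) := Set.univ

/-!
A size-1 trace of a partial function on `Fin 2` carries, besides its one label, the position
of the retained point, and that is the missing bit: keeping point 0 announces a constant
function, keeping point 1 a non-constant one. Size 0 cannot work, since `β` would then have
to reproduce all four functions from the empty trace. For unlabeled schemes the four total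
functions must receive four distinct subsets, but only three subsets of `Fin 2` have at most
one element; two points always suffice by recording where the function is `true`.
-/

section CompressionSchemes

variable {B : Type*} {F : Set (B → Bool)}

theorem isPartialOf_some {f : B → Bool} (hf : f ∈ F) : IsPartialOf F (fun x => some (f x)) :=
  ⟨f, hf, fun _ _ h => Option.some_inj.mp h⟩

theorem HasUCS.mono {k m : ℕ} (h : HasUCS F k) (hkm : k ≤ m) : HasUCS F m := by
  obtain ⟨α, β, hαβ⟩ := h
  exact ⟨α, β, fun g hg =>
    ⟨(hαβ g hg).1, (hαβ g hg).2.1.trans hkm, (hαβ g hg).2.2⟩⟩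

theorem hasUCS_card [Fintype B] : HasUCS F (Fintype.card B) := by
  classical
  refine ⟨fun g => {x | g x = some true}, fun S x => decide (x ∈ S), fun g _ =>
    ⟨fun x hx => ?_, Finset.card_le_univ _, fun x b hb => ?_⟩⟩
  · rw [(Finset.mem_filter.mp hx).2]
    rfl
  · cases b <;> simp [hb]

theorem HasUCS.ncard_le [Fintype B] {k : ℕ} (h : HasUCS F k) :
    F.ncard ≤ {S : Finset B | S.card ≤ k}.ncard := by
  obtain ⟨α, β, hαβ⟩ := h
  refine Set.ncard_le_ncard_of_injOn (fun f => α fun x => some (f x))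
    (fun f hf => (hαβ _ (isPartialOf_some hf)).2.1) (fun f hf f' hf' hff' => ?_)
  have hβ : ∀ f ∈ F, β (α fun x => some (f x)) = f := fun f hf =>
    funext fun x => (hαβ _ (isPartialOf_some hf)).2.2 x (f x) rfl
  rw [← hβ f hf, ← hβ f' hf']
  exact congrArg β hff'

theorem HasLCS.mono [Fintype B] {k m : ℕ} (h : HasLCS F k) (hkm : k ≤ m) : HasLCS F m := by
  obtain ⟨α, β, hαβ⟩ := h
  exact ⟨α, β, fun g hg =>
    ⟨(hαβ g hg).1, (hαβ g hg).2.1.trans hkm, (hαβ g hg).2.2⟩⟩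

theorem HasLCS.subsingleton_of_zero [Fintype B] (h : HasLCS F 0) : F.Subsingleton := by
  obtain ⟨α, β, hαβ⟩ := h
  have hβ : ∀ f ∈ F, β (fun _ => none) = f := by
    intro f hf
    obtain ⟨-, hcard, hext⟩ := hαβ _ (isPartialOf_some hf)
    have hempty : α (fun x => some (f x)) = fun _ => none := by
      funext x
      simpa using Finset.eq_empty_iff_forall_notMem.mp
        (Finset.card_eq_zero.mp (Nat.le_zero.mp hcard)) x
    exact funext fun x => hempty ▸ hext x (f x) rfl
  exact fun f hf f' hf' => (hβ f hf).symm.trans (hβ f' hf')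

end CompressionSchemes

theorem P2_not_subsingleton : ¬ P2.Subsingleton := fun h =>
  Bool.false_ne_true (congrFun (h (Set.mem_univ fun _ => false) (Set.mem_univ fun _ => true)) 0)

def p2Compress (g : Fin 2 → Option Bool) : Fin 2 → Option Bool :=
  if g 0 = none ∨ ((g 1).isSome ∧ g 1 ≠ g 0) then
    fun x => if x = 1 then g 1 else none
  else fun x => if x = 0 then g 0 else none

def p2Reconstruct (h : Fin 2 → Option Bool) : Fin 2 → Bool := fun x =>
  match h 0, h 1 with
  | some b, _ => b
  | none, some b => if x = 1 then b else !b
  | none, none => false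

theorem hasLCS_P2_one : HasLCS P2 1 :=
  ⟨p2Compress, p2Reconstruct, fun g hg => by clear hg; revert g; decide⟩

theorem not_hasLCS_P2_zero : ¬ HasLCS P2 0 := fun h =>
  P2_not_subsingleton (HasLCS.subsingleton_of_zero h)

theorem not_hasUCS_P2_one : ¬ HasUCS P2 1 := fun h => by
  have hle := h.ncard_le
  have hP2 : P2.ncard = 4 := by simp [P2, Set.ncard_univ]
  have hsmall : {S : Finset (Fin 2) | S.card ≤ 1}.ncard = 3 := by
    rw [Set.ncard_eq_toFinset_card']
    decide
  omega

/-- `P 2` admits a labeled compression scheme of size 1 but none of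
size 0, so `lcs (P 2) = 1 < 2 = ucs (P 2)`. -/
theorem lcs_P2_eq_one :
    HasLCS P2 1 ∧ ¬ HasLCS P2 0 ∧ lcs P2 = 1 ∧ lcs P2 < ucs P2 ∧ ucs P2 = 2 := by
  have hlcs : lcs P2 = 1 :=
    (Nat.sInf_upward_closed_eq_succ_iff (fun _ _ hkm hk => HasLCS.mono hk hkm) 0).mpr
      ⟨hasLCS_P2_one, not_hasLCS_P2_zero⟩
  have hucs : ucs P2 = 2 :=
    (Nat.sInf_upward_closed_eq_succ_iff (fun _ _ hkm hk => HasUCS.mono hk hkm) 1).mpr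
      ⟨hasUCS_card, not_hasUCS_P2_one⟩
  exact ⟨hasLCS_P2_one, not_hasLCS_P2_zero, hlcs, by omega, hucs⟩
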